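/- Let |ψ⟩^{RAB} = Σ_{l=0}^{D−1} √λ_l |l⟩^R ⊗ |ψ_l⟩^{AB} be a Schmidt decomposition with all λ_l > 0, and let M be a quantum channel on B(H_A ⊗ H_B ⊗ H_X) (X an auxiliary system) acting trivially on R. Then M achieves (id^R ⊗ M)(ψ^{RAB} ⊗ Φ) = ψ'^{RAB} ⊗ Φ' (where ψ' is the state with A-part moved, Φ, Φ' fixed resource states) if and only if M(|ψ_l⟩⟨ψ_{l'}| ⊗ Φ) = |ψ'_l⟩⟨ψ'_{l'}| ⊗ Φ' for all l, l'. In particular, M achieves the transformation for |ψ⟩ if and only if it achieves it for the corresponding maximally entangled state D^{-1/2} Σ_l |l⟩^R ⊗ |ψ_l⟩^{AB}. -/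

import Mathlib

open Matrix Kronecker Finset
open scoped ComplexConjugate Classical ComplexOrder

noncomputable section

/-- Density matrix (outer product) of a vector. -/
def dmv {n : Type*} (v : n → ℂ) : Matrix n n ℂ :=
  Matrix.of fun i j => v i * conj (v j)

/-- Outer product `|u⟩⟨v|`. -/
def outer {n : Type*} (u v : n → ℂ) : Matrix n n ℂ :=
  Matrix.of fun i j => u i * conj (v j)

/-- Largest eigenvalue of a (Hermitian) matrix. -/
def maxEig {n : Type*} [Fintype n] [DecidableEq n] (A : Matrix n n ℂ) : ℝ :=
  if h : A.IsHermitian then ⨆ i, h.eigenvalues i else 0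

/-- Sum of the `k` largest eigenvalues of a Hermitian matrix. -/
def topSum {n : Type*} [Fintype n] [DecidableEq n] (A : Matrix n n ℂ) (k : ℕ) : ℝ :=
  if h : A.IsHermitian then
    sSup {x : ℝ | ∃ s : Finset n, s.card = k ∧ x = ∑ i ∈ s, h.eigenvalues i}
  else 0

/-- Majorization of Hermitian operators: `A ≺ B` (possibly on different spaces):
every partial sum of the `k` largest eigenvalues of `A` is at most that of `B`,
and the traces agree. -/
def Maj {m n : Type*} [Fintype m] [DecidableEq m] [Fintype n] [DecidableEq n]
    (A : Matrix m m ℂ) (B : Matrix n n ℂ) : Prop :=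
  (∀ k : ℕ, topSum A k ≤ topSum B k) ∧ A.trace = B.trace

/-- Total matrix square root: the positive square root for PSD matrices, `0` otherwise. -/
def msqrt {n : Type*} [Fintype n] [DecidableEq n] (A : Matrix n n ℂ) : Matrix n n ℂ :=
  if h : A.PosSemidef then
    (h.1.eigenvectorUnitary : Matrix n n ℂ) *
      diagonal ((↑) ∘ Real.sqrt ∘ h.1.eigenvalues) * (star h.1.eigenvectorUnitary : Matrix n n ℂ)
  else 0

/-- Trace norm (sum of singular values). -/
def traceNorm {n : Type*} [Fintype n] [DecidableEq n] (A : Matrix n n ℂ) : ℝ :=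
  ((msqrt (Aᴴ * A)).trace).re

/-- Fidelity `F(ρ,σ) = ‖√ρ √σ‖₁`. -/
def fid {n : Type*} [Fintype n] [DecidableEq n] (ρ σ : Matrix n n ℂ) : ℝ :=
  traceNorm (msqrt ρ * msqrt σ)

/-- Purified distance `P(ρ,σ) = √(1 − F²(ρ,σ))`. -/
def pd {n : Type*} [Fintype n] [DecidableEq n] (ρ σ : Matrix n n ℂ) : ℝ :=
  Real.sqrt (1 - fid ρ σ ^ 2)

/-- Choi matrix of a map on matrices. -/
def choi {m n : Type*} [Fintype m] [DecidableEq m]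
    (N : Matrix m m ℂ → Matrix n n ℂ) : Matrix (m × n) (m × n) ℂ :=
  Matrix.of fun p q => N (Matrix.single p.1 q.1 1) p.2 q.2

/-- A map is mixed-unitary if it is a convex combination of unitary conjugations. -/
def IsMixedUnitary {n : Type*} [Fintype n] [DecidableEq n]
    (N : Matrix n n ℂ → Matrix n n ℂ) : Prop :=
  ∃ (m : ℕ) (p : Fin m → ℝ) (U : Fin m → Matrix n n ℂ),
    (∀ i, 0 ≤ p i) ∧ (∑ i, p i = 1) ∧ (∀ i, U i ∈ Matrix.unitaryGroup n ℂ) ∧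
    ∀ ρ, N ρ = ∑ i, (p i : ℂ) • (U i * ρ * (U i)ᴴ)

/-- `id_R ⊗ M` acting blockwise on a matrix on `R × S`. -/
def idTensor {R S T : Type*} (M : Matrix S S ℂ →ₗ[ℂ] Matrix T T ℂ)
    (ρ : Matrix (R × S) (R × S) ℂ) : Matrix (R × T) (R × T) ℂ :=
  Matrix.of fun p q => M (Matrix.of fun s s' => ρ (p.1, s) (q.1, s')) p.2 q.2

end

/-! Both sides of the merging condition expand as `∑_{l,l'} |e_l⟩⟨e_{l'}| ⊗ B_{l l'}`. The map
`id ⊗ M` acts blockwise on such sums, and by orthonormality of `e` each block is recovered by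
contracting with `⟨e_m|` and `|e_{m'}⟩`, so the condition holds iff it holds block by block. The
Schmidt coefficients only rescale block `(l, l')` by `c_l c̄_{l'} ≠ 0`, so the blockwise condition
does not depend on them; this gives the comparison with the maximally entangled state. -/

section Merging

variable {ι R S T X X' : Type*}

theorem idTensor_sum {κ : Type*} (M : Matrix S S ℂ →ₗ[ℂ] Matrix T T ℂ) (s : Finset κ)
    (ρ : κ → Matrix (R × S) (R × S) ℂ) :
    idTensor M (∑ k ∈ s, ρ k) = ∑ k ∈ s, idTensor M (ρ k) := by
  ext p q
  have hblock : (Matrix.of fun a b => (∑ k ∈ s, ρ k) (p.1, a) (q.1, b)) =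
      ∑ k ∈ s, Matrix.of fun a b => ρ k (p.1, a) (q.1, b) := by
    ext a b
    simp only [of_apply, Matrix.sum_apply]
  rw [idTensor, of_apply, hblock, map_sum, Matrix.sum_apply, Matrix.sum_apply]
  rfl

theorem idTensor_kronecker (M : Matrix S S ℂ →ₗ[ℂ] Matrix T T ℂ) (A : Matrix R R ℂ)
    (B : Matrix S S ℂ) : idTensor M (A ⊗ₖ B) = A ⊗ₖ M B := by
  ext p q
  have hblock : (Matrix.of fun a b => (A ⊗ₖ B) (p.1, a) (q.1, b)) = A p.1 q.1 • B := by
    ext a b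
    simp only [of_apply, kroneckerMap_apply, Matrix.smul_apply, smul_eq_mul]
  rw [idTensor, of_apply, hblock, map_smul, Matrix.smul_apply, kroneckerMap_apply, smul_eq_mul]

variable [Fintype ι]

/-- `|ψ⟩⟨ψ| ⊗ Φ` for `|ψ⟩ = ∑ₗ c l |e l⟩ ⊗ |f l⟩`. -/
def schmidtState (c : ι → ℂ) (e : ι → R → ℂ) (f : ι → S → ℂ) (Φ : Matrix X X ℂ) :
    Matrix (R × (S × X)) (R × (S × X)) ℂ :=
  Matrix.of fun p q => (∑ l, c l * e l p.1 * f l p.2.1) * conj (∑ l, c l * e l q.1 * f l q.2.1) *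
    Φ p.2.2 q.2.2

variable {e : ι → R → ℂ}

theorem schmidtState_eq_sum_outer_kronecker (c : ι → ℂ) (f : ι → S → ℂ) (Φ : Matrix X X ℂ) :
    schmidtState c e f Φ =
      ∑ l, ∑ l', outer (e l) (e l') ⊗ₖ ((c l * conj (c l')) • (outer (f l) (f l') ⊗ₖ Φ)) := by
  ext p q
  simp only [schmidtState, of_apply, map_sum, map_mul, Matrix.sum_apply, kroneckerMap_apply, outer,
    Matrix.smul_apply, smul_eq_mul]
  rw [Finset.sum_mul_sum]
  simp only [Finset.sum_mul]
  exact Finset.sum_congr rfl fun l _ => Finset.sum_congr rfl fun l' _ => by ring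

theorem schmidtState_const (a : ℂ) (f : ι → S → ℂ) (Φ : Matrix X X ℂ) :
    schmidtState (fun _ => a) e f Φ = Matrix.of fun p q =>
      (a * ∑ l, e l p.1 * f l p.2.1) * conj (a * ∑ l, e l q.1 * f l q.2.1) * Φ p.2.2 q.2.2 := by
  simp only [schmidtState, Finset.mul_sum, mul_assoc]

variable [DecidableEq ι] [Fintype R]

theorem sum_conj_mul_sum_mul (he : ∀ l l', ∑ r, conj (e l r) * e l' r = if l = l' then 1 else 0)
    (v : ι → ℂ) (m : ι) : ∑ r, conj (e m r) * ∑ l, e l r * v l = v m := by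
  simp_rw [Finset.mul_sum]
  rw [Finset.sum_comm]
  simp_rw [← mul_assoc, ← Finset.sum_mul, he]
  simp

theorem sum_sum_mul_conj_mul (he : ∀ l l', ∑ r, conj (e l r) * e l' r = if l = l' then 1 else 0)
    (w : ι → ℂ) (m : ι) : ∑ r, (∑ l, w l * conj (e l r)) * e m r = w m := by
  simp_rw [Finset.sum_mul]
  rw [Finset.sum_comm]
  simp_rw [mul_assoc, ← Finset.mul_sum, he]
  simp

theorem sum_conj_mul_sum_outer_kronecker_apply_mul
    (he : ∀ l l', ∑ r, conj (e l r) * e l' r = if l = l' then 1 else 0)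
    (B : ι → ι → Matrix S S ℂ) (m m' : ι) (s s' : S) :
    ∑ r, ∑ r', conj (e m r) * (∑ l, ∑ l', outer (e l) (e l') ⊗ₖ B l l') (r, s) (r', s') * e m' r'
      = B m m' s s' := by
  calc _ = ∑ r, conj (e m r) * ∑ l, e l r *
          ∑ r', (∑ l', B l l' s s' * conj (e l' r')) * e m' r' := by
        refine Finset.sum_congr rfl fun r _ => ?_
        simp only [Matrix.sum_apply, kroneckerMap_apply, outer, of_apply, Finset.mul_sum,
          Finset.sum_mul]
        rw [Finset.sum_comm]
        refine Finset.sum_congr rfl fun l _ => Finset.sum_congr rfl fun r' _ => ?_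
        exact Finset.sum_congr rfl fun l' _ => by ring
    _ = ∑ r, conj (e m r) * ∑ l, e l r * B l m' s s' := by simp_rw [sum_sum_mul_conj_mul he]
    _ = B m m' s s' := sum_conj_mul_sum_mul he _ m

theorem sum_outer_kronecker_injective
    (he : ∀ l l', ∑ r, conj (e l r) * e l' r = if l = l' then 1 else 0) :
    Function.Injective fun B : ι → ι → Matrix S S ℂ =>
      ∑ l, ∑ l', outer (e l) (e l') ⊗ₖ B l l' := by
  intro B C h
  funext m m'
  ext s s'
  dsimp only at h
  rw [← sum_conj_mul_sum_outer_kronecker_apply_mul he B,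
    ← sum_conj_mul_sum_outer_kronecker_apply_mul he C, h]

theorem idTensor_sum_outer_kronecker_eq_iff
    (he : ∀ l l', ∑ r, conj (e l r) * e l' r = if l = l' then 1 else 0)
    (M : Matrix S S ℂ →ₗ[ℂ] Matrix T T ℂ) (B : ι → ι → Matrix S S ℂ) (C : ι → ι → Matrix T T ℂ) :
    idTensor M (∑ l, ∑ l', outer (e l) (e l') ⊗ₖ B l l') =
        ∑ l, ∑ l', outer (e l) (e l') ⊗ₖ C l l' ↔
      ∀ l l', M (B l l') = C l l' := by
  simp only [idTensor_sum, idTensor_kronecker]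
  refine ⟨fun h l l' => ?_, fun h => by simp only [h]⟩
  exact congrFun (congrFun (sum_outer_kronecker_injective he h) l) l'

theorem idTensor_schmidtState_eq_iff
    (he : ∀ l l', ∑ r, conj (e l r) * e l' r = if l = l' then 1 else 0)
    {c : ι → ℂ} (hc : ∀ l, c l ≠ 0) (f : ι → S → ℂ) (g : ι → T → ℂ)
    (Φ : Matrix X X ℂ) (Φ' : Matrix X' X' ℂ)
    (M : Matrix (S × X) (S × X) ℂ →ₗ[ℂ] Matrix (T × X') (T × X') ℂ) :
    idTensor M (schmidtState c e f Φ) = schmidtState c e g Φ' ↔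
      ∀ l l', M (outer (f l) (f l') ⊗ₖ Φ) = outer (g l) (g l') ⊗ₖ Φ' := by
  simp only [schmidtState_eq_sum_outer_kronecker, idTensor_sum_outer_kronecker_eq_iff he, map_smul]
  exact forall₂_congr fun l l' => smul_right_inj (mul_ne_zero (hc l) ((map_ne_zero _).mpr (hc l')))

end Merging

theorem stmt15_general {Rt AB X AB' X' : Type*}
    [Fintype Rt] (D : ℕ) (lam : Fin D → ℝ) (hlam : ∀ l, 0 < lam l)
    (e : Fin D → Rt → ℂ)
    (he : ∀ l l', ∑ r, conj (e l r) * e l' r = if l = l' then 1 else 0)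
    (f : Fin D → AB → ℂ) (g : Fin D → AB' → ℂ) (Φ : Matrix X X ℂ) (Φ' : Matrix X' X' ℂ)
    (M : Matrix (AB × X) (AB × X) ℂ →ₗ[ℂ] Matrix (AB' × X') (AB' × X') ℂ) :
    ((idTensor M (Matrix.of fun p q : Rt × (AB × X) =>
        (∑ l, ((Real.sqrt (lam l) : ℝ) : ℂ) * e l p.1 * f l p.2.1) *
          conj (∑ l, ((Real.sqrt (lam l) : ℝ) : ℂ) * e l q.1 * f l q.2.1) *
          Φ p.2.2 q.2.2) =
      Matrix.of fun p q : Rt × (AB' × X') =>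
        (∑ l, ((Real.sqrt (lam l) : ℝ) : ℂ) * e l p.1 * g l p.2.1) *
          conj (∑ l, ((Real.sqrt (lam l) : ℝ) : ℂ) * e l q.1 * g l q.2.1) *
          Φ' p.2.2 q.2.2) ↔
      ∀ l l', M (Matrix.of fun s s' : AB × X => f l s.1 * conj (f l' s'.1) * Φ s.2 s'.2) =
        Matrix.of fun t t' : AB' × X' => g l t.1 * conj (g l' t'.1) * Φ' t.2 t'.2) ∧
    ((idTensor M (Matrix.of fun p q : Rt × (AB × X) =>
        (∑ l, ((Real.sqrt (lam l) : ℝ) : ℂ) * e l p.1 * f l p.2.1) *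
          conj (∑ l, ((Real.sqrt (lam l) : ℝ) : ℂ) * e l q.1 * f l q.2.1) *
          Φ p.2.2 q.2.2) =
      Matrix.of fun p q : Rt × (AB' × X') =>
        (∑ l, ((Real.sqrt (lam l) : ℝ) : ℂ) * e l p.1 * g l p.2.1) *
          conj (∑ l, ((Real.sqrt (lam l) : ℝ) : ℂ) * e l q.1 * g l q.2.1) *
          Φ' p.2.2 q.2.2) ↔
      (idTensor M (Matrix.of fun p q : Rt × (AB × X) =>
        (((Real.sqrt D : ℝ) : ℂ)⁻¹ * ∑ l, e l p.1 * f l p.2.1) *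
          conj (((Real.sqrt D : ℝ) : ℂ)⁻¹ * ∑ l, e l q.1 * f l q.2.1) *
          Φ p.2.2 q.2.2) =
      Matrix.of fun p q : Rt × (AB' × X') =>
        (((Real.sqrt D : ℝ) : ℂ)⁻¹ * ∑ l, e l p.1 * g l p.2.1) *
          conj (((Real.sqrt D : ℝ) : ℂ)⁻¹ * ∑ l, e l q.1 * g l q.2.1) *
          Φ' p.2.2 q.2.2)) := by
  have hsqrt : ∀ l, ((Real.sqrt (lam l) : ℝ) : ℂ) ≠ 0 := fun l =>
    Complex.ofReal_ne_zero.mpr (Real.sqrt_pos.mpr (hlam l)).ne'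
  have hinvSqrt : ∀ l : Fin D, ((Real.sqrt D : ℝ) : ℂ)⁻¹ ≠ 0 := fun l =>
    inv_ne_zero (Complex.ofReal_ne_zero.mpr (Real.sqrt_pos.mpr (Nat.cast_pos.mpr l.pos)).ne')
  have hschmidt := idTensor_schmidtState_eq_iff he hsqrt f g Φ Φ' M
  refine ⟨hschmidt, ?_⟩
  rw [← schmidtState_const, ← schmidtState_const]
  exact hschmidt.trans (idTensor_schmidtState_eq_iff he hinvSqrt f g Φ Φ' M).symm

/-- a channel acting trivially on `R` achieves exact merging of
`|ψ⟩ = Σ √λ_l |l⟩^R ⊗ |ψ_l⟩` iff it maps every block `|ψ_l⟩⟨ψ_{l'}| ⊗ Φ` to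
`|ψ'_l⟩⟨ψ'_{l'}| ⊗ Φ'`; in particular iff it achieves merging of the corresponding
maximally entangled state. -/
theorem stmt15 {Rt AB X AB' X' : Type*}
    [Fintype Rt] [DecidableEq Rt] [Fintype AB] [DecidableEq AB]
    [Fintype X] [DecidableEq X] [Fintype AB'] [DecidableEq AB']
    [Fintype X'] [DecidableEq X']
    (D : ℕ) (hD : 0 < D)
    (lam : Fin D → ℝ) (hlam : ∀ l, 0 < lam l) (hsum : ∑ l, lam l = 1)
    (e : Fin D → Rt → ℂ)
    (he : ∀ l l', ∑ r, conj (e l r) * e l' r = if l = l' then 1 else 0)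
    (f : Fin D → AB → ℂ)
    (hf : ∀ l l', ∑ s, conj (f l s) * f l' s = if l = l' then 1 else 0)
    (g : Fin D → AB' → ℂ)
    (hg : ∀ l l', ∑ t, conj (g l t) * g l' t = if l = l' then 1 else 0)
    (Φ : Matrix X X ℂ) (hΦ : Φ.PosSemidef) (hΦ1 : Φ.trace = 1)
    (Φ' : Matrix X' X' ℂ) (hΦ' : Φ'.PosSemidef) (hΦ'1 : Φ'.trace = 1)
    (M : Matrix (AB × X) (AB × X) ℂ →ₗ[ℂ] Matrix (AB' × X') (AB' × X') ℂ) :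
    ((idTensor M (Matrix.of fun p q : Rt × (AB × X) =>
        (∑ l, ((Real.sqrt (lam l) : ℝ) : ℂ) * e l p.1 * f l p.2.1) *
          conj (∑ l, ((Real.sqrt (lam l) : ℝ) : ℂ) * e l q.1 * f l q.2.1) *
          Φ p.2.2 q.2.2) =
      Matrix.of fun p q : Rt × (AB' × X') =>
        (∑ l, ((Real.sqrt (lam l) : ℝ) : ℂ) * e l p.1 * g l p.2.1) *
          conj (∑ l, ((Real.sqrt (lam l) : ℝ) : ℂ) * e l q.1 * g l q.2.1) *
          Φ' p.2.2 q.2.2) ↔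
      ∀ l l', M (Matrix.of fun s s' : AB × X => f l s.1 * conj (f l' s'.1) * Φ s.2 s'.2) =
        Matrix.of fun t t' : AB' × X' => g l t.1 * conj (g l' t'.1) * Φ' t.2 t'.2) ∧
    ((idTensor M (Matrix.of fun p q : Rt × (AB × X) =>
        (∑ l, ((Real.sqrt (lam l) : ℝ) : ℂ) * e l p.1 * f l p.2.1) *
          conj (∑ l, ((Real.sqrt (lam l) : ℝ) : ℂ) * e l q.1 * f l q.2.1) *
          Φ p.2.2 q.2.2) =
      Matrix.of fun p q : Rt × (AB' × X') =>
        (∑ l, ((Real.sqrt (lam l) : ℝ) : ℂ) * e l p.1 * g l p.2.1) *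
          conj (∑ l, ((Real.sqrt (lam l) : ℝ) : ℂ) * e l q.1 * g l q.2.1) *
          Φ' p.2.2 q.2.2) ↔
      (idTensor M (Matrix.of fun p q : Rt × (AB × X) =>
        (((Real.sqrt D : ℝ) : ℂ)⁻¹ * ∑ l, e l p.1 * f l p.2.1) *
          conj (((Real.sqrt D : ℝ) : ℂ)⁻¹ * ∑ l, e l q.1 * f l q.2.1) *
          Φ p.2.2 q.2.2) =
      Matrix.of fun p q : Rt × (AB' × X') =>
        (((Real.sqrt D : ℝ) : ℂ)⁻¹ * ∑ l, e l p.1 * g l p.2.1) *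
          conj (((Real.sqrt D : ℝ) : ℂ)⁻¹ * ∑ l, e l q.1 * g l q.2.1) *
          Φ' p.2.2 q.2.2)) :=
  stmt15_general D lam hlam e he f g Φ Φ' M
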